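/- arXiv:1112.3869 — 6 statements merged into one kernel-verified Lean document; each statement's English description precedes it below -/
import Mathlib

section
/- Let A = ⊕_{n≥0} A_n be an ℕ-graded k-algebra with a central regular element g ∈ A_1, and let φ: A → A/(g-1)A be the canonical surjection. Define a filtration Λ on A/(g-1)A by Λ_n = φ(A_{≤n}). Then the associated graded algebra gr_Λ(A/(g-1)A) is isomorphic to A/gA. -/
/-!
Write `φ : A → A/(g-1)A`. Since `φ (g * z) = φ z`, multiplying by powers of `g` moves `A_{≤ n}`
into `A_n`, so `Λ n = φ (A_n)` and `Λ n` modulo `Λ (n-1)` is a quotient of `A_n`. An element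
`a ∈ A_n` dies there iff `a - c = (g - 1) x` for some `c ∈ A_{< n}`. Comparing homogeneous
components, `x_{d+1} = g x_d` for `d ≥ n`; as `x` has finitely many components and `g` is
regular, `x_d = 0` for `d ≥ n`, and then the degree-`n` component gives `a = g x_{n-1}`.
Conversely `a = g b` with `a ∈ A_n` forces `b ∈ A_{n-1}`, and `φ a = φ b ∈ Λ (n-1)`.
-/

open DirectSum Submodule LinearMap

theorem IsLeftRegular.eq_zero_of_succ_eq_mul {M : Type*} [MulZeroClass M] {g : M}
    (hg : IsLeftRegular g) {u : ℕ → M} {n : ℕ} (hu : ∀ᶠ d in Filter.atTop, u d = 0)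
    (hrec : ∀ d ≥ n, u (d + 1) = g * u d) : ∀ d ≥ n, u d = 0 := by
  obtain ⟨N, hN⟩ := Filter.eventually_atTop.1 hu
  suffices ∀ j d, n ≤ d → N ≤ d + j → u d = 0 from fun d hd => this N d hd (by omega)
  intro j
  induction j with
  | zero => exact fun d _ hd => hN d hd
  | succ j ih =>
    intro d hnd hNd
    exact hg (show g * u d = g * 0 by rw [← hrec d hnd, ih (d + 1) (by omega) (by omega), mul_zero])

theorem iSup_lt_iSup_le {α : Type*} [CompleteLattice α] (f : ℕ → α) (n : ℕ) :
    ⨆ j < n, ⨆ i ≤ j, f i = ⨆ i < n, f i :=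
  le_antisymm
    (iSup₂_le fun _ hj => iSup₂_le fun i hi => le_iSup₂_of_le i (by omega) le_rfl)
    (iSup₂_le fun i hi => le_iSup₂_of_le i hi (le_iSup₂_of_le i le_rfl le_rfl))

noncomputable def Submodule.quotientComapEquivOfSurjective {R M N : Type*} [Ring R]
    [AddCommGroup M] [Module R M] [AddCommGroup N] [Module R N] (f : M →ₗ[R] N)
    (hf : Function.Surjective f) {p : Submodule R M} {q : Submodule R N} (h : q.comap f = p) :
    (M ⧸ p) ≃ₗ[R] N ⧸ q :=
  LinearEquiv.ofBijective (p.mapQ q f h.ge)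
    ⟨by rw [← ker_eq_bot, ker_mapQ, h, mkQ_map_self],
     by rw [← range_eq_top, range_mapQ, range_eq_top.2 hf, map_top, range_mkQ]⟩

theorem Submodule.quotientComapEquivOfSurjective_mk {R M N : Type*} [Ring R]
    [AddCommGroup M] [Module R M] [AddCommGroup N] [Module R N] (f : M →ₗ[R] N)
    (hf : Function.Surjective f) {p : Submodule R M} {q : Submodule R N} (h : q.comap f = p)
    (x : M) : quotientComapEquivOfSurjective f hf h (Quotient.mk x) = Quotient.mk (f x) :=
  rfl

theorem DirectSum.eventually_decompose_eq_zero {M σ : Type*} [AddCommMonoid M] [SetLike σ M]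
    [AddSubmonoidClass σ M] (ℳ : ℕ → σ) [Decomposition ℳ] (x : M) :
    ∀ᶠ d in Filter.atTop, (decompose ℳ x d : M) = 0 := by
  classical
  rw [← Nat.cofinite_eq_atTop]
  filter_upwards [(decompose ℳ x).support.eventually_cofinite_notMem] with d hd
  rw [DFinsupp.notMem_support_iff.1 hd, ZeroMemClass.coe_zero]

section Graded

variable {R A : Type*} [CommRing R] [Ring A] [Algebra R A] (𝒜 : ℕ → Submodule R A)
  [GradedAlgebra 𝒜] {g : A}

theorem DirectSum.decompose_eq_zero_of_mem_iSup_lt {n d : ℕ} {c : A}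
    (hc : c ∈ ⨆ i < n, 𝒜 i) (hd : n ≤ d) : (decompose 𝒜 c d : A) = 0 := by
  have : ⨆ i < n, 𝒜 i ≤ ker (GradedAlgebra.proj 𝒜 d) :=
    iSup₂_le fun i hi x hx => by
      rw [LinearMap.mem_ker, GradedAlgebra.proj_apply, decompose_of_mem_ne 𝒜 hx (by omega)]
  simpa only [LinearMap.mem_ker, GradedAlgebra.proj_apply] using this hc

theorem DirectSum.coe_decompose_mul_succ (hg1 : g ∈ 𝒜 1) (x : A) (d : ℕ) :
    (decompose 𝒜 (g * x) (d + 1) : A) = g * decompose 𝒜 x d := by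
  rw [coe_decompose_mul_of_left_mem_of_le 𝒜 hg1 (by omega), Nat.add_sub_cancel]

theorem mem_iSup_lt_of_mul_mem (hg1 : g ∈ 𝒜 1) (hg : IsLeftRegular g) {n : ℕ} {b : A}
    (hb : g * b ∈ 𝒜 n) : b ∈ ⨆ i < n, 𝒜 i := by
  classical
  rw [← sum_support_decompose 𝒜 b]
  refine sum_mem fun i _ => ?_
  by_cases hi : i + 1 = n
  · exact le_iSup₂ (f := fun i (_ : i < n) => 𝒜 i) i (by omega) (decompose 𝒜 b i).2
  · have hzero : g * (decompose 𝒜 b i : A) = g * 0 := by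
      rw [← coe_decompose_mul_succ 𝒜 hg1, decompose_of_mem_ne 𝒜 hb (Ne.symm hi), mul_zero]
    rw [hg hzero]
    exact zero_mem _

theorem exists_mul_eq_of_sub_eq_sub_one_mul (hg1 : g ∈ 𝒜 1) (hg : IsLeftRegular g) {n : ℕ}
    {a c x : A} (ha : a ∈ 𝒜 n) (hc : c ∈ ⨆ i < n, 𝒜 i) (h : a - c = (g - 1) * x) :
    ∃ b, g * b = a := by
  classical
  have hcomp (d : ℕ) : (decompose 𝒜 a d : A) - decompose 𝒜 c d
      = decompose 𝒜 (g * x) d - decompose 𝒜 x d := by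
    simpa only [decompose_sub, DirectSum.sub_apply, Submodule.coe_sub] using
      congrArg (fun z => (decompose 𝒜 z d : A)) (h.trans (sub_one_mul g x))
  have hx : ∀ d ≥ n, (decompose 𝒜 x d : A) = 0 := by
    refine hg.eq_zero_of_succ_eq_mul (eventually_decompose_eq_zero 𝒜 x) fun d hd => ?_
    have := hcomp (d + 1)
    rw [decompose_of_mem_ne 𝒜 ha (by omega), decompose_eq_zero_of_mem_iSup_lt 𝒜 hc (by omega),
      coe_decompose_mul_succ 𝒜 hg1, sub_zero, eq_comm, sub_eq_zero] at this
    exact this.symm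
  have ha_eq := hcomp n
  rw [decompose_of_mem_same 𝒜 ha, decompose_eq_zero_of_mem_iSup_lt 𝒜 hc le_rfl,
    hx n le_rfl, sub_zero, sub_zero, coe_decompose_mul_of_left_mem 𝒜 n hg1] at ha_eq
  split_ifs at ha_eq
  · exact ⟨_, ha_eq.symm⟩
  · exact ⟨0, by rw [ha_eq, mul_zero]⟩

theorem mkQ_mul_left_eq (g z : A) :
    (range (mulLeft R (g - 1))).mkQ (g * z) = (range (mulLeft R (g - 1))).mkQ z :=
  (Submodule.Quotient.eq _).2 ⟨z, sub_one_mul g z⟩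

theorem mkQ_pow_mul_eq (g : A) (m : ℕ) (z : A) :
    (range (mulLeft R (g - 1))).mkQ (g ^ m * z) = (range (mulLeft R (g - 1))).mkQ z := by
  induction m with
  | zero => rw [pow_zero, one_mul]
  | succ m ih => rw [pow_succ', mul_assoc, mkQ_mul_left_eq, ih]

theorem map_mkQ_iSup_le_eq (hg1 : g ∈ 𝒜 1) (n : ℕ) :
    map (range (mulLeft R (g - 1))).mkQ (⨆ i ≤ n, 𝒜 i)
      = map (range (mulLeft R (g - 1))).mkQ (𝒜 n) := by
  refine le_antisymm ?_ (map_mono (le_iSup₂ (f := fun i (_ : i ≤ n) => 𝒜 i) n le_rfl))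
  refine map_le_iff_le_comap.2 (iSup₂_le fun i hi x hx => ?_)
  have hpow : g ^ (n - i) * x ∈ 𝒜 n := by
    have := SetLike.mul_mem_graded (SetLike.pow_mem_graded (n - i) hg1) hx
    rwa [smul_eq_mul, mul_one, Nat.sub_add_cancel hi] at this
  exact ⟨_, hpow, mkQ_pow_mul_eq g (n - i) x⟩

theorem mkQ_mem_map_iSup_lt_iff (hg1 : g ∈ 𝒜 1) (hg : IsLeftRegular g) {n : ℕ} {a : A}
    (ha : a ∈ 𝒜 n) :
    (range (mulLeft R (g - 1))).mkQ a ∈ map (range (mulLeft R (g - 1))).mkQ (⨆ i < n, 𝒜 i)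
      ↔ a ∈ range (mulLeft R g) := by
  constructor
  · rintro ⟨c, hc, hca⟩
    obtain ⟨x, hx⟩ := (Submodule.Quotient.eq _).1 hca.symm
    exact exists_mul_eq_of_sub_eq_sub_one_mul 𝒜 hg1 hg ha hc hx.symm
  · rintro ⟨b, rfl⟩
    exact ⟨b, mem_iSup_lt_of_mul_mem 𝒜 hg1 hg ha, (mkQ_mul_left_eq g b).symm⟩

end Graded

theorem assocGraded_of_filtration_iso_quotient_by_g_general
    (k A : Type*) [Field k] [Ring A] [Algebra k A]
    (𝒜 : ℕ → Submodule k A) [GradedAlgebra 𝒜] (g : A)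
    (hg1 : g ∈ 𝒜 1) (hreg : IsRegular g) :
    -- `J = (g-1)A`, the (two-sided, as `g-1` is central) ideal generated by `g - 1`;
    -- `φ = J.mkQ : A → A ⧸ J`;  `Λ n = φ (A_{≤ n})`;  the degree-`n` piece of `gr_Λ` is
    -- `Λ n ⧸ Λ (n-1)` and the degree-`n` piece of `A/gA` is `𝒜 n ⧸ (𝒜 n ∩ gA)`.
    ∀ (J : Submodule k A), J = LinearMap.range (LinearMap.mulLeft k (g - 1)) →
    ∀ (Λ : ℕ → Submodule k (A ⧸ J)), (∀ n, Λ n = Submodule.map J.mkQ (⨆ i ≤ n, 𝒜 i)) →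
    ∃ e : ∀ n : ℕ,
        ((Λ n) ⧸ (Submodule.comap (Λ n).subtype (⨆ j, ⨆ _ : j < n, Λ j))) ≃ₗ[k]
        ((𝒜 n) ⧸ (Submodule.comap (𝒜 n).subtype
          (LinearMap.range (LinearMap.mulLeft k g)))),
      ∀ (n : ℕ) (a : 𝒜 n) (h : J.mkQ a ∈ Λ n),
        e n (Submodule.Quotient.mk ⟨J.mkQ a, h⟩) = Submodule.Quotient.mk a := by
  rintro J rfl Λ hΛ
  obtain rfl : Λ = _ := funext hΛ
  set φ := (range (mulLeft k (g - 1))).mkQ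
  have hΛ_lt (n : ℕ) : ⨆ j, ⨆ _ : j < n, map φ (⨆ i ≤ j, 𝒜 i) = map φ (⨆ i < n, 𝒜 i) := by
    simp only [← Submodule.map_iSup, iSup_lt_iSup_le]
  let f (n : ℕ) : 𝒜 n →ₗ[k] map φ (⨆ i ≤ n, 𝒜 i) :=
    (φ ∘ₗ (𝒜 n).subtype).codRestrict _ fun a => map_mkQ_iSup_le_eq 𝒜 hg1 n ▸ mem_map_of_mem a.2
  have hf (n : ℕ) : Function.Surjective (f n) := by
    rintro ⟨y, hy⟩
    obtain ⟨a, ha, rfl⟩ := map_mkQ_iSup_le_eq 𝒜 hg1 n ▸ hy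
    exact ⟨⟨a, ha⟩, rfl⟩
  have hker (n : ℕ) : ((comap (map φ (⨆ i ≤ n, 𝒜 i)).subtype
      (⨆ j, ⨆ _ : j < n, map φ (⨆ i ≤ j, 𝒜 i))).comap (f n))
      = comap (𝒜 n).subtype (range (mulLeft k g)) := by
    ext a
    rw [mem_comap, mem_comap, mem_comap, hΛ_lt]
    exact mkQ_mem_map_iSup_lt_iff 𝒜 hg1 hreg.left a.2
  refine ⟨fun n => (quotientComapEquivOfSurjective (f n) (hf n) (hker n)).symm, fun n a h => ?_⟩
  rw [LinearEquiv.symm_apply_eq, quotientComapEquivOfSurjective_mk]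
  rfl

/-- Let `A = ⊕ₙ Aₙ` be an ℕ-graded `k`-algebra with a central regular element
`g ∈ A₁`, and let `φ : A → A/(g-1)A` be the canonical surjection.  Define a filtration `Λ` on
`A/(g-1)A` by `Λ n = φ(A_{≤n})`.  Then the associated graded algebra `gr_Λ (A/(g-1)A)` is
isomorphic to `A/gA`: for each `n` the canonical map induces a `k`-linear isomorphism
`Λ n / Λ (n-1) ≅ Aₙ / (Aₙ ∩ gA)` (the degree-`n` piece of `A/gA`), which automatically
carries the graded multiplication onto that of `A/gA`. -/
theorem assocGraded_of_filtration_iso_quotient_by_g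
    (k A : Type*) [Field k] [Ring A] [Algebra k A]
    (𝒜 : ℕ → Submodule k A) [GradedAlgebra 𝒜] (g : A)
    (hg1 : g ∈ 𝒜 1) (hgc : ∀ a, g * a = a * g) (hreg : IsRegular g) :
    -- `J = (g-1)A`, the (two-sided, as `g-1` is central) ideal generated by `g - 1`;
    -- `φ = J.mkQ : A → A ⧸ J`;  `Λ n = φ (A_{≤ n})`;  the degree-`n` piece of `gr_Λ` is
    -- `Λ n ⧸ Λ (n-1)` and the degree-`n` piece of `A/gA` is `𝒜 n ⧸ (𝒜 n ∩ gA)`.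
    ∀ (J : Submodule k A), J = LinearMap.range (LinearMap.mulLeft k (g - 1)) →
    ∀ (Λ : ℕ → Submodule k (A ⧸ J)), (∀ n, Λ n = Submodule.map J.mkQ (⨆ i ≤ n, 𝒜 i)) →
    ∃ e : ∀ n : ℕ,
        ((Λ n) ⧸ (Submodule.comap (Λ n).subtype (⨆ j, ⨆ _ : j < n, Λ j))) ≃ₗ[k]
        ((𝒜 n) ⧸ (Submodule.comap (𝒜 n).subtype
          (LinearMap.range (LinearMap.mulLeft k g)))),
      ∀ (n : ℕ) (a : 𝒜 n) (h : J.mkQ a ∈ Λ n),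
        e n (Submodule.Quotient.mk ⟨J.mkQ a, h⟩) = Submodule.Quotient.mk a :=
  assocGraded_of_filtration_iso_quotient_by_g_general k A 𝒜 g hg1 hreg
end

section
/- Let k be an algebraically closed field and let K/k be a finitely generated field extension of transcendence degree 1. Then K satisfies the ascending chain condition on intermediate fields containing k: every chain k ⊆ K(1) ⊆ K(2) ⊆ ⋯ ⊆ K of subfields stabilizes. -/
/-!
If the chain contains an element `t` transcendental over `k`, then since the transcendence degree
is one, `K` is algebraic, and (being finitely generated) finite, over `k⟮t⟯`. From that point on the
chain lies among the intermediate fields of the finite extension `K / k⟮t⟯`, which satisfy the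
ascending chain condition, as subspaces of a finite-dimensional space do. Otherwise every member
of the chain is algebraic over the algebraically closed field `k`, hence equal to `k`.
-/

open IntermediateField

theorem exists_forall_ge_eq_of_le_of_monotone {α : Type*} [PartialOrder α] {a : α}
    [WellFoundedGT {x // a ≤ x}] {f : ℕ → α} (hf : Monotone f) {N : ℕ} (ha : a ≤ f N) :
    ∃ M, ∀ n ≥ M, f n = f M := by
  let g : ℕ →o {x // a ≤ x} :=
    ⟨fun n ↦ ⟨f (N + n), ha.trans (hf (Nat.le_add_right N n))⟩,
      fun m n hmn ↦ hf (Nat.add_le_add_left hmn N)⟩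
  obtain ⟨m, hm⟩ := wellFoundedGT_iff_monotone_chain_condition.mp inferInstance g
  refine ⟨N + m, fun n hn ↦ ?_⟩
  obtain ⟨d, rfl⟩ := Nat.exists_eq_add_of_le hn
  have hstable := congrArg Subtype.val (hm (m + d) (Nat.le_add_right m d))
  rw [Nat.add_assoc]
  exact hstable.symm

namespace IntermediateField

variable {k K : Type*} [Field k] [Field K] [Algebra k K]

instance wellFoundedGT_of_finiteDimensional [FiniteDimensional k K] :
    WellFoundedGT (IntermediateField k K) :=
  (Subalgebra.toSubmodule.strictMono.comp toSubalgebra_strictMono).wellFoundedGT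

instance wellFoundedGT_subtype_le_of_finiteDimensional (E : IntermediateField k K)
    [FiniteDimensional E K] :
    WellFoundedGT {L : IntermediateField k K // E ≤ L} :=
  (extendScalars.orderIso E).strictMono.wellFoundedGT

theorem finiteDimensional_of_fg_top_of_isAlgebraic (hfg : (⊤ : IntermediateField k K).FG)
    (E : IntermediateField k K) [Algebra.IsAlgebraic E K] : FiniteDimensional E K :=
  have := fg_top_iff.mp hfg
  have := Algebra.EssFiniteType.of_comp k E K
  Algebra.finite_of_essFiniteType_of_isAlgebraic

end IntermediateField

theorem Transcendental.isAlgebraic_adjoin_simple_of_trdeg_le_one {k K : Type*} [Field k] [Field K]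
    [Algebra k K] (htr : Algebra.trdeg k K ≤ 1) {t : K} (ht : Transcendental k t) :
    Algebra.IsAlgebraic k⟮t⟯ K := by
  have hind : AlgebraicIndependent k fun _ : Unit ↦ t := algebraicIndependent_unique_type_iff.mpr ht
  have hbasis := hind.isTranscendenceBasis_of_lift_trdeg_le_of_finite (by simpa using htr)
  have halg := hbasis.isAlgebraic_field
  rwa [Set.range_const] at halg

/-- Let `k` be an algebraically closed field and `K/k` a finitely generated field
extension of transcendence degree 1. Then `K` satisfies the ascending chain condition on
intermediate fields containing `k`: every chain `k ⊆ K 1 ⊆ K 2 ⊆ ⋯ ⊆ K` of subfields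
stabilizes. -/
theorem acc_intermediate_fields_of_trdeg_one
    (k K : Type*) [Field k] [IsAlgClosed k] [Field K] [Algebra k K]
    (hfg : (⊤ : IntermediateField k K).FG)
    (htr : ∃ x : K, IsTranscendenceBasis k (fun _ : Fin 1 => x))
    (F : ℕ → IntermediateField k K) (hmono : Monotone F) :
    ∃ N, ∀ n ≥ N, F n = F N := by
  obtain ⟨x, hx⟩ := htr
  have htrdeg : Algebra.trdeg k K ≤ 1 := by simpa using hx.lift_cardinalMk_eq_trdeg.ge
  by_cases htrans : ∃ N, ∃ t ∈ F N, Transcendental k t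
  · obtain ⟨N, t, htN, ht⟩ := htrans
    have := ht.isAlgebraic_adjoin_simple_of_trdeg_le_one htrdeg
    have := finiteDimensional_of_fg_top_of_isAlgebraic hfg k⟮t⟯
    exact exists_forall_ge_eq_of_le_of_monotone hmono (adjoin_simple_le_iff.mpr htN)
  · push Not at htrans
    have hbot (n : ℕ) : F n = ⊥ :=
      have : Algebra.IsAlgebraic k (F n) :=
        ⟨fun y ↦ isAlgebraic_iff.mpr (not_not.mp (htrans n y y.2))⟩
      eq_bot_of_isAlgClosed_of_isAlgebraic (F n)
    exact ⟨0, fun n _ ↦ by rw [hbot n, hbot 0]⟩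
end

section
/- Let A be an infinite-dimensional k-algebra that is a domain, and suppose every k-subalgebra of A is noetherian. Then A is just infinite: every nonzero two-sided ideal of A has finite codimension as a k-vector space. -/
/-!
For `0 ≠ x ∈ I` the map `a ↦ a * x` embeds `A` into the subalgebra `R = k + I`, so `A` is a
noetherian, hence finitely generated, `R`-module. Modulo `I` every element of `R` acts as a scalar
of `k`, so the images of finitely many `R`-module generators span `A ⧸ I` over `k`.
-/

open Submodule

section

variable {k A : Type*}

def Submodule.oneSupSubalgebra [CommSemiring k] [Semiring A] [Algebra k A] (I : Submodule k A)
    (hIl : ∀ (a : A), ∀ x ∈ I, a * x ∈ I) : Subalgebra k A :=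
  (1 ⊔ I).toSubalgebra (mem_sup_left (one_le.mp le_rfl)) fun x y hx hy => by
    have hmul : (1 ⊔ I) * (1 ⊔ I) ≤ 1 ⊔ I := by
      rw [mul_sup, mul_one]
      exact sup_le le_rfl (le_sup_of_le_right (mul_le.mpr fun a _ => hIl a))
    exact hmul (mul_mem_mul hx hy)

theorem Submodule.toSubmodule_oneSupSubalgebra [CommSemiring k] [Semiring A] [Algebra k A]
    (I : Submodule k A) (hIl : ∀ (a : A), ∀ x ∈ I, a * x ∈ I) :
    Subalgebra.toSubmodule (I.oneSupSubalgebra hIl) = 1 ⊔ I :=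
  toSubalgebra_toSubmodule _ _ _

theorem isNoetherian_of_mul_mem_subalgebra [CommRing k] [Ring A] [NoZeroDivisors A]
    [Algebra k A] (R : Subalgebra k A) [IsNoetherianRing R] {x : A} (hx : x ≠ 0)
    (hxR : ∀ a : A, a * x ∈ R) : IsNoetherian R A := by
  have hrange : LinearMap.range (LinearMap.mulRight R x) ≤ span R {1} := by
    rintro _ ⟨a, rfl⟩
    exact mem_span_singleton.mpr ⟨⟨a * x, hxR a⟩, mul_one _⟩
  have : IsNoetherian R (span R {(1 : A)}) := isNoetherian_span_of_finite R (Set.finite_singleton 1)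
  have : IsNoetherian R (LinearMap.range (LinearMap.mulRight R x)) := isNoetherian_of_le hrange
  have hinj : Function.Injective (LinearMap.mulRight R x) := fun _ _ hab => mul_right_cancel₀ hx hab
  exact isNoetherian_of_linearEquiv (LinearEquiv.ofInjective _ hinj).symm

theorem finiteDimensional_quotient_of_finite_subalgebra [Field k] [Ring A] [Algebra k A]
    {R : Subalgebra k A} [Module.Finite R A] {I : Submodule k A}
    (hIr : ∀ (a : A), ∀ x ∈ I, x * a ∈ I) (hR : Subalgebra.toSubmodule R ≤ 1 ⊔ I) :
    FiniteDimensional k (A ⧸ I) := by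
  obtain ⟨S, hS⟩ := Module.Finite.fg_top (R := R) (M := A)
  have hmul : (1 ⊔ I) * (I ⊔ span k S) ≤ I ⊔ span k S := by
    rw [Submodule.sup_mul, one_mul]
    exact sup_le le_rfl (le_sup_of_le_left (mul_le.mpr fun i hi a _ => hIr a i hi))
  let N : Submodule R A :=
    { (I ⊔ span k S).toAddSubmonoid with
      smul_mem' := fun r _ ha => hmul (mul_mem_mul (hR r.2) ha) }
  have hN : I ⊔ span k S = ⊤ := by
    refine eq_top_iff.mpr fun a _ => ?_
    have : span R (S : Set A) ≤ N := span_le.mpr fun s hs => mem_sup_right (subset_span hs)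
    exact this (hS ▸ mem_top)
  refine Module.finite_def.mpr ?_
  rw [← (map_mkQ_eq_top I (span k S)).mpr hN]
  exact (fg_span S.finite_toSet).map _

end

theorem just_infinite_of_all_subalgebras_noetherian_general
    (k A : Type*) [Field k] [Ring A] [Algebra k A] [IsDomain A]
    (hnoeth : ∀ R : Subalgebra k A, IsNoetherianRing R)
    (I : Submodule k A)
    (hIl : ∀ (a : A), ∀ x ∈ I, a * x ∈ I) (hIr : ∀ (a : A), ∀ x ∈ I, x * a ∈ I)
    (hI : I ≠ ⊥) :
    FiniteDimensional k (A ⧸ I) := by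
  obtain ⟨x, hxI, hx0⟩ := I.ne_bot_iff.mp hI
  let R := I.oneSupSubalgebra hIl
  have : IsNoetherianRing R := hnoeth R
  have : IsNoetherian R A :=
    isNoetherian_of_mul_mem_subalgebra R hx0 fun a => mem_sup_right (hIl a x hxI)
  exact finiteDimensional_quotient_of_finite_subalgebra hIr (I.toSubmodule_oneSupSubalgebra hIl).le

/-- Let `A` be an infinite-dimensional `k`-algebra that is a domain, and suppose
every `k`-subalgebra of `A` is noetherian.  Then `A` is just infinite: every nonzero two-sided
ideal of `A` has finite codimension as a `k`-vector space.  (A two-sided ideal is encoded as a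
`k`-subspace `I` closed under left and right multiplication by arbitrary elements of `A`.) -/
theorem just_infinite_of_all_subalgebras_noetherian
    (k A : Type*) [Field k] [Ring A] [Algebra k A] [IsDomain A]
    (hinf : ¬ FiniteDimensional k A)
    (hnoeth : ∀ R : Subalgebra k A, IsNoetherianRing R)
    (I : Submodule k A)
    (hIl : ∀ (a : A), ∀ x ∈ I, a * x ∈ I) (hIr : ∀ (a : A), ∀ x ∈ I, x * a ∈ I)
    (hI : I ≠ ⊥) :
    FiniteDimensional k (A ⧸ I) :=
  just_infinite_of_all_subalgebras_noetherian_general k A hnoeth I hIl hIr hI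
end

section
/- Let A be a k-algebra domain and I a nonzero two-sided ideal of A such that the subalgebra R = k + I is noetherian (as a ring). Then A/I is finite-dimensional over k. -/
/-!
If `0 ≠ x ∈ I`, right multiplication by `x` embeds `A` into `R` as a left `R`-module, so `A` is a
finitely generated `R`-module because `R` is noetherian. Every `r ∈ R` is a scalar `c ∈ k` modulo
`I`, so modulo `I` the `R`-span of finitely many generators is already their `k`-span.
-/

open Submodule

theorem Subalgebra.module_finite_of_forall_mul_mem {k A : Type*} [CommSemiring k] [Ring A]
    [NoZeroDivisors A] [Algebra k A] (R : Subalgebra k A) [IsNoetherianRing R] {x : A}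
    (hx : x ≠ 0) (hxR : ∀ a : A, a * x ∈ R) : Module.Finite R A :=
  let mulRight : A →ₗ[R] R :=
    { toFun := fun a => ⟨a * x, hxR a⟩
      map_add' := fun a b => Subtype.ext (add_mul a b x)
      map_smul' := fun r a => Subtype.ext (mul_assoc (r : A) a x) }
  Module.Finite.of_injective mulRight fun _ _ h => mul_right_cancel₀ hx (congrArg Subtype.val h)

section

variable {k A : Type*} [CommRing k] [Ring A] [Algebra k A] {I : Submodule k A}

theorem Submodule.mkQ_mul_eq_smul_of_sub_mem (hIr : ∀ a : A, ∀ y ∈ I, y * a ∈ I) {r : A} {c : k}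
    (hrc : r - algebraMap k A c ∈ I) (a : A) : I.mkQ (r * a) = c • I.mkQ a := by
  rw [← map_smul, ← sub_eq_zero, ← map_sub, mkQ_apply, Quotient.mk_eq_zero, Algebra.smul_def,
    ← sub_mul]
  exact hIr a _ hrc

theorem Submodule.finite_quotient_of_finite_subalgebra (R : Subalgebra k A) [Module.Finite R A]
    (hIr : ∀ a : A, ∀ y ∈ I, y * a ∈ I) (hR : ∀ r ∈ R, ∃ c : k, r - algebraMap k A c ∈ I) :
    Module.Finite k (A ⧸ I) := by
  classical
  obtain ⟨s, hs⟩ := Module.Finite.fg_top (R := R) (M := A)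
  suffices ∀ a ∈ span R (s : Set A), I.mkQ a ∈ span k (I.mkQ '' s) by
    refine ⟨⟨s.image I.mkQ, eq_top_iff.2 fun q _ => ?_⟩⟩
    obtain ⟨a, rfl⟩ := I.mkQ_surjective q
    simpa using this a (hs ▸ mem_top)
  intro a ha
  induction ha using span_induction with
  | mem y hy => exact subset_span ⟨y, hy, rfl⟩
  | zero => simp
  | add y z _ _ hy hz => rw [map_add]; exact add_mem hy hz
  | smul r y _ hy =>
    obtain ⟨c, hc⟩ := hR r r.2
    rw [Subalgebra.smul_def, smul_eq_mul, mkQ_mul_eq_smul_of_sub_mem hIr hc]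
    exact smul_mem _ c hy

end

/-- Let `A` be a `k`-algebra domain and `I` a nonzero two-sided ideal of `A` such
that the subalgebra `R = k + I` is noetherian (as a ring).  Then `A/I` is finite-dimensional
over `k`. -/
theorem finite_codim_of_k_plus_ideal_noetherian
    (k A : Type*) [Field k] [Ring A] [Algebra k A] [IsDomain A]
    (I : Submodule k A)
    (hIl : ∀ (a : A), ∀ x ∈ I, a * x ∈ I) (hIr : ∀ (a : A), ∀ x ∈ I, x * a ∈ I)
    (hI : I ≠ ⊥)
    (R : Subalgebra k A) (hR : ∀ x, x ∈ R ↔ ∃ c : k, x - algebraMap k A c ∈ I)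
    (hnoeth : IsNoetherianRing R) :
    FiniteDimensional k (A ⧸ I) := by
  have hIR : ∀ y ∈ I, y ∈ R := fun y hy => (hR y).2 ⟨0, by simpa using hy⟩
  obtain ⟨x, hxI, hx0⟩ := exists_mem_ne_zero_of_ne_bot hI
  have : Module.Finite R A :=
    R.module_finite_of_forall_mul_mem hx0 fun a => hIR _ (hIl a x hxI)
  exact finite_quotient_of_finite_subalgebra R hIr fun r hr => (hR r).1 hr
end

section
/- Let R be a commutative k-algebra (k a field) such that every k-subalgebra of R is noetherian. Then the Krull dimension of R is at most 1. -/
/-!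
Modulo a minimal prime we may assume that `R` is a domain, and must show that every nonzero
prime `P` is maximal. The subalgebra `S = k[P] = k + P` is noetherian, so `P` is a finitely
generated faithful `S`-module, stable under multiplication by `R`; by the determinant trick `R` is
integral over `S`. As `S / (P ∩ S) ≅ k` is a field, `P ∩ S` is maximal in `S`, hence `P` is maximal
in `R` by integrality.
-/

open Ideal

theorem Subalgebra.isNoetherianRing_of_surjective {k A B : Type*} [CommRing k] [CommRing A]
    [CommRing B] [Algebra k A] [Algebra k B] (f : A →ₐ[k] B) (hf : Function.Surjective f)
    (h : ∀ S : Subalgebra k A, IsNoetherianRing S) (S : Subalgebra k B) : IsNoetherianRing S := by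
  have := h (S.comap f)
  refine _root_.isNoetherianRing_of_surjective _ _
    ((f.comp (S.comap f).val).codRestrict S fun x => x.2).toRingHom ?_
  rintro ⟨y, hy⟩
  obtain ⟨x, rfl⟩ := hf y
  exact ⟨⟨x, hy⟩, rfl⟩

theorem Ideal.fg_restrictScalars_of_subset {k D : Type*} [CommRing k] [CommRing D] [Algebra k D]
    (S : Subalgebra k D) [IsNoetherianRing S] (P : Ideal D) (hP : (P : Set D) ⊆ S) :
    (P.restrictScalars S).FG := by
  have : P.restrictScalars S =
      Submodule.map (Algebra.linearMap S D) (P.comap (algebraMap S D)) := by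
    ext x
    exact ⟨fun hx => ⟨⟨x, hP hx⟩, hx, rfl⟩, by rintro ⟨y, hy, rfl⟩; exact hy⟩
  rw [this]
  exact (IsNoetherian.noetherian _).map _

theorem Ideal.isMaximal_comap_of_le_comap_bot {k A : Type*} [Field k] [CommRing A] [Algebra k A]
    (P : Ideal A) [P.IsPrime] (S : Subalgebra k A)
    (hS : S ≤ (⊥ : Subalgebra k (A ⧸ P)).comap (Quotient.mkₐ k P)) :
    (P.comap (algebraMap S A)).IsMaximal := by
  let g : S →ₐ[k] k := (Algebra.botEquiv k (A ⧸ P)).toAlgHom.comp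
    (((Quotient.mkₐ k P).comp S.val).codRestrict ⊥ fun x => hS x.2)
  have hg : Function.Surjective g := fun c => ⟨algebraMap k S c, g.commutes c⟩
  have hker : RingHom.ker (g : S →+* k) = P.comap (algebraMap S A) := by
    ext x
    change Algebra.botEquiv k (A ⧸ P) _ = 0 ↔ _
    rw [map_eq_zero_iff _ (Algebra.botEquiv k (A ⧸ P)).injective, Subtype.ext_iff]
    exact Quotient.eq_zero_iff_mem
  exact hker ▸ RingHom.ker_isMaximal_of_surjective (g : S →+* k) hg

theorem Ideal.IsPrime.isMaximal_of_isNoetherianRing_adjoin (k : Type*) {D : Type*} [Field k]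
    [CommRing D] [IsDomain D] [Algebra k D] {P : Ideal D} [P.IsPrime] (hP : P ≠ ⊥)
    [IsNoetherianRing (Algebra.adjoin k (P : Set D))] : P.IsMaximal := by
  set S := Algebra.adjoin k (P : Set D)
  have hfg : (P.restrictScalars S).FG := P.fg_restrictScalars_of_subset S Algebra.subset_adjoin
  have : Algebra.IsIntegral S D :=
    ⟨fun x => isIntegral_of_smul_mem_submodule _ (by simpa using hP) hfg x
      fun _ hn => P.mul_mem_left x hn⟩
  have : (P.comap (algebraMap S D)).IsMaximal :=
    P.isMaximal_comap_of_le_comap_bot S <| Algebra.adjoin_le fun x hx => by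
      simp [Quotient.eq_zero_iff_mem.mpr hx]
  exact isMaximal_of_isIntegral_of_isMaximal_comap P this

theorem Ring.krullDimLE_one_of_forall_subalgebra_isNoetherianRing {k D : Type*} [Field k]
    [CommRing D] [IsDomain D] [Algebra k D] (h : ∀ S : Subalgebra k D, IsNoetherianRing S) :
    Ring.KrullDimLE 1 D :=
  .mk₁' fun P hP _ =>
    have := h (Algebra.adjoin k (P : Set D))
    IsPrime.isMaximal_of_isNoetherianRing_adjoin k hP

theorem Ring.krullDimLE_one_of_forall_minimalPrimes {R : Type*} [CommRing R]
    (h : ∀ q ∈ minimalPrimes R, Ring.KrullDimLE 1 (R ⧸ q)) : Ring.KrullDimLE 1 R := by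
  refine .mk₁ fun I hI => or_iff_not_imp_left.2 fun hmin => ?_
  obtain ⟨q, hq, hqI⟩ := exists_minimalPrimes_le (bot_le : ⊥ ≤ I)
  have hlt : q < I := lt_of_le_of_ne hqI fun h => hmin (h ▸ hq)
  have : q.IsPrime := hq.1.1
  have := h q hq
  have : (I.map (Ideal.Quotient.mk q)).IsMaximal := by
    have := map_isPrime_of_surjective (f := Ideal.Quotient.mk q) Ideal.Quotient.mk_surjective
      (I := I) (by simpa using hlt.le)
    refine IsPrime.isMaximal_of_ne_bot this ?_
    rw [ne_eq, map_eq_bot_iff_le_ker, mk_ker]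
    exact hlt.not_ge
  simpa [comap_map_of_surjective' (Ideal.Quotient.mk q) Ideal.Quotient.mk_surjective, hlt.le] using
    comap_isMaximal_of_surjective (Ideal.Quotient.mk q) Ideal.Quotient.mk_surjective
      (K := I.map (Ideal.Quotient.mk q))

/-- Let `R` be a commutative `k`-algebra (`k` a field) such that every
`k`-subalgebra of `R` is noetherian.  Then the Krull dimension of `R` is at most 1. -/
theorem krullDim_le_one_of_all_subalgebras_noetherian
    (k R : Type*) [Field k] [CommRing R] [Algebra k R]
    (hnoeth : ∀ S : Subalgebra k R, IsNoetherianRing S) :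
    ringKrullDim R ≤ 1 := by
  suffices Ring.KrullDimLE 1 R from Ring.krullDimLE_iff.mp this
  refine Ring.krullDimLE_one_of_forall_minimalPrimes fun q hq => ?_
  have : q.IsPrime := hq.1.1
  exact Ring.krullDimLE_one_of_forall_subalgebra_isNoetherianRing (k := k)
    (Subalgebra.isNoetherianRing_of_surjective (Quotient.mkₐ k q) (Quotient.mkₐ_surjective k q)
      hnoeth)
end

section
/- Let D = k{x,y}/(xy - yx - x²). Then the ideal I = xD is a two-sided ideal with D/I ≅ k[y], and the subalgebra R = k + xD of D is not noetherian. -/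
noncomputable section

variable (k : Type*) [Field k]

/-- The defining relation `xy - yx - x² = 0` of `D = k{x,y}/(xy - yx - x²)`. -/
def dRel : FreeAlgebra k (Fin 2) → FreeAlgebra k (Fin 2) → Prop :=
  fun a b => a = FreeAlgebra.ι k 0 * FreeAlgebra.ι k 1 -
      FreeAlgebra.ι k 1 * FreeAlgebra.ι k 0 - FreeAlgebra.ι k 0 * FreeAlgebra.ι k 0 ∧ b = 0

/-- `D = k{x,y}/(xy - yx - x²)`. -/
def DAlg := RingQuot (dRel k)

instance : Ring (DAlg k) := inferInstanceAs (Ring (RingQuot (dRel k)))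
instance : Algebra k (DAlg k) := inferInstanceAs (Algebra k (RingQuot (dRel k)))

/-- The image of `x` in `D`. -/
def xD : DAlg k := RingQuot.mkAlgHom k (dRel k) (FreeAlgebra.ι k 0)

/-!
Since `yx = x(y - x)`, every `e` satisfies `ex ∈ xD`, so `xD` is two-sided; every element is
`xa + p(y)`, so `x ↦ 0, y ↦ y` induces `D/xD ≅ k[y]`.

For the subalgebra `R = k + xD`, let `D` act on `k[y][x]` by `x ↦ x·` and `y ↦ y - x² d/dx`.
This action preserves `x·k[y][x]`, so the coefficient `λ(d)` of `x` in `d • 1` satisfies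
`λ((c + xa) s) = c λ(s)` for `s ∈ xD`. As `λ(xyʲ) = yʲ`, the left ideal of `R` generated by
`x, xy, …, xyⁿ⁻¹` is sent by `λ` into polynomials of degree `< n` and misses `xyⁿ`: these left
ideals form a strictly increasing chain.
-/

open Polynomial

theorem not_isNoetherian_of_notMem_span {R M : Type*} [Semiring R] [AddCommMonoid M] [Module R M]
    (v : ℕ → M) (hv : ∀ n, v n ∉ Submodule.span R (v '' Finset.range n)) :
    ¬ IsNoetherian R M := by
  intro _
  refine not_strictMono_of_wellFoundedGT (fun n ↦ Submodule.span R (v '' Finset.range n))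
    (strictMono_nat_of_lt_succ fun n ↦ ?_)
  refine (Submodule.span_mono (Set.image_mono ?_)).lt_of_not_ge fun hle ↦ hv n (hle ?_)
  · simp
  · exact Submodule.subset_span ⟨n, by simp, rfl⟩

namespace DAlg

def mk : FreeAlgebra k (Fin 2) →ₐ[k] DAlg k := RingQuot.mkAlgHom k (dRel k)

def yD : DAlg k := mk k (FreeAlgebra.ι k 1)

theorem mk_ι_zero : mk k (FreeAlgebra.ι k 0) = xD k := rfl

theorem mk_ι_one : mk k (FreeAlgebra.ι k 1) = yD k := rfl

theorem yD_mul_xD : yD k * xD k = xD k * (yD k - xD k) := by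
  have h : mk k (FreeAlgebra.ι k 0 * FreeAlgebra.ι k 1 - FreeAlgebra.ι k 1 * FreeAlgebra.ι k 0 -
      FreeAlgebra.ι k 0 * FreeAlgebra.ι k 0) = 0 :=
    (RingQuot.mkAlgHom_rel k (show dRel k _ 0 from ⟨rfl, rfl⟩)).trans (map_zero _)
  simp only [map_sub, map_mul, mk_ι_zero, mk_ι_one] at h
  rw [mul_sub, ← sub_eq_zero, ← neg_eq_zero, ← h]
  abel

@[elab_as_elim]
theorem induction {motive : DAlg k → Prop} (algebraMap : ∀ c, motive (algebraMap k _ c))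
    (xD : motive (xD k)) (yD : motive (yD k)) (add : ∀ a b, motive a → motive b → motive (a + b))
    (mul : ∀ a b, motive a → motive b → motive (a * b)) (d : DAlg k) : motive d := by
  obtain ⟨f, rfl⟩ : ∃ f, mk k f = d := RingQuot.mkAlgHom_surjective k (dRel k) d
  induction f using FreeAlgebra.induction with
  | grade0 c => simpa only [AlgHom.commutes] using algebraMap c
  | grade1 i =>
    fin_cases i
    · exact xD
    · exact yD
  | mul a b ha hb => simpa only [map_mul] using mul _ _ ha hb
  | add a b ha hb => simpa only [map_add] using add _ _ ha hb

theorem exists_mul_xD_eq_xD_mul (d : DAlg k) : ∃ a, d * xD k = xD k * a := by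
  induction d using DAlg.induction with
  | algebraMap c => exact ⟨algebraMap k _ c, Algebra.commutes c _⟩
  | xD => exact ⟨xD k, rfl⟩
  | yD => exact ⟨yD k - xD k, yD_mul_xD k⟩
  | add a b ha hb =>
    obtain ⟨u, hu⟩ := ha
    obtain ⟨v, hv⟩ := hb
    exact ⟨u + v, by rw [add_mul, hu, hv, mul_add]⟩
  | mul a b ha hb =>
    obtain ⟨u, hu⟩ := ha
    obtain ⟨v, hv⟩ := hb
    exact ⟨u * v, by rw [mul_assoc, hv, ← mul_assoc, hu, mul_assoc]⟩

theorem exists_eq_xD_mul_add_aeval (d : DAlg k) :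
    ∃ (a : DAlg k) (p : k[X]), d = xD k * a + aeval (yD k) p := by
  induction d using DAlg.induction with
  | algebraMap c => exact ⟨0, C c, by simp⟩
  | xD => exact ⟨1, 0, by simp⟩
  | yD => exact ⟨0, X, by simp⟩
  | add a b ha hb =>
    obtain ⟨u, p, rfl⟩ := ha
    obtain ⟨v, q, rfl⟩ := hb
    exact ⟨u + v, p + q, by rw [map_add, mul_add]; abel⟩
  | mul a b ha hb =>
    obtain ⟨u, p, rfl⟩ := ha
    obtain ⟨v, q, rfl⟩ := hb
    obtain ⟨w, hw⟩ := exists_mul_xD_eq_xD_mul k (aeval (yD k) p)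
    refine ⟨u * (xD k * v + aeval (yD k) q) + w * v, p * q, ?_⟩
    rw [add_mul, mul_add (aeval (yD k) p), ← mul_assoc (aeval (yD k) p), hw, map_mul]
    noncomm_ring

def toPoly : DAlg k →ₐ[k] k[X] :=
  RingQuot.liftAlgHom k ⟨FreeAlgebra.lift k ![0, X], by
    rintro _ _ ⟨rfl, rfl⟩
    simp⟩

theorem toPoly_mk (f : FreeAlgebra k (Fin 2)) : toPoly k (mk k f) = FreeAlgebra.lift k ![0, X] f :=
  RingQuot.liftAlgHom_mkAlgHom_apply _ _ _ _

@[simp]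
theorem toPoly_xD : toPoly k (xD k) = 0 := by
  rw [← mk_ι_zero, toPoly_mk]
  simp

@[simp]
theorem toPoly_aeval_yD (p : k[X]) : toPoly k (aeval (yD k) p) = p := by
  rw [← aeval_algHom_apply]
  simp [← mk_ι_one, toPoly_mk]

theorem toPoly_eq_zero_iff (d : DAlg k) : toPoly k d = 0 ↔ ∃ a, d = xD k * a := by
  refine ⟨fun hd ↦ ?_, fun ⟨a, ha⟩ ↦ by simp [ha]⟩
  obtain ⟨a, p, rfl⟩ := exists_eq_xD_mul_add_aeval k d
  simp only [map_add, map_mul, toPoly_xD, zero_mul, toPoly_aeval_yD, zero_add] at hd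
  exact ⟨a, by simp [hd]⟩

/-- `k[X][X]` is `k[y][x]`, with outer variable `x`; `x` acts by multiplication and `y` by
`y - x² d/dx`. -/
def repGen : Fin 2 → Module.End k k[X][X] :=
  ![LinearMap.mulLeft k X, LinearMap.mulLeft k (C X) -
    LinearMap.mulLeft k (X ^ 2) * (derivative : k[X][X] →ₗ[k[X]] k[X][X]).restrictScalars k]

theorem repGen_rel :
    repGen k 0 * repGen k 1 - repGen k 1 * repGen k 0 - repGen k 0 * repGen k 0 = 0 := by
  ext1 f
  simp only [repGen, Matrix.cons_val_zero, Matrix.cons_val_one, Matrix.cons_val_fin_one,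
    LinearMap.sub_apply, Module.End.mul_apply, LinearMap.mulLeft_apply,
    LinearMap.coe_restrictScalars, derivative_mul, derivative_X, one_mul, LinearMap.zero_apply]
  ring

def rep : DAlg k →ₐ[k] Module.End k k[X][X] :=
  RingQuot.liftAlgHom k ⟨FreeAlgebra.lift k (repGen k), by
    rintro _ _ ⟨rfl, rfl⟩
    simpa using repGen_rel k⟩

theorem rep_mk (f : FreeAlgebra k (Fin 2)) : rep k (mk k f) = FreeAlgebra.lift k (repGen k) f :=
  RingQuot.liftAlgHom_mkAlgHom_apply _ _ _ _

theorem rep_xD_apply (f : k[X][X]) : rep k (xD k) f = X * f := by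
  simp [← mk_ι_zero, rep_mk, repGen]

theorem rep_yD_apply (f : k[X][X]) : rep k (yD k) f = C X * f - X ^ 2 * derivative f := by
  simp [← mk_ι_one, rep_mk, repGen]

theorem coeff_zero_rep_apply_eq_zero (d : DAlg k) {f : k[X][X]} (hf : f.coeff 0 = 0) :
    (rep k d f).coeff 0 = 0 := by
  induction d using DAlg.induction generalizing f with
  | algebraMap c => simp [hf]
  | xD => simp [rep_xD_apply]
  | yD => simp [rep_yD_apply, hf, pow_two]
  | add a b ha hb => simp [ha hf, hb hf]
  | mul a b ha hb =>
    rw [map_mul, Module.End.mul_apply]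
    exact ha (hb hf)

theorem rep_yD_pow_one (j : ℕ) : rep k (yD k ^ j) 1 = C (X ^ j) := by
  induction j with
  | zero => simp
  | succ j ih =>
    rw [pow_succ', map_mul, Module.End.mul_apply, ih, rep_yD_apply, derivative_C, mul_zero,
      sub_zero, ← C_mul, pow_succ']

def linearCoeff : DAlg k →ₗ[k] k[X] :=
  (lcoeff k[X] 1).restrictScalars k ∘ₗ LinearMap.applyₗ 1 ∘ₗ (rep k).toLinearMap

theorem linearCoeff_apply (d : DAlg k) : linearCoeff k d = (rep k d 1).coeff 1 := rfl

theorem linearCoeff_xD_mul_yD_pow (j : ℕ) : linearCoeff k (xD k * yD k ^ j) = X ^ j := by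
  rw [linearCoeff_apply, map_mul, Module.End.mul_apply, rep_yD_pow_one, rep_xD_apply, coeff_X_mul,
    coeff_C_zero]

theorem coeff_one_rep_apply (c : k) (a : DAlg k) {f : k[X][X]} (hf : f.coeff 0 = 0) :
    (rep k (algebraMap k _ c + xD k * a) f).coeff 1 = c • f.coeff 1 := by
  rw [map_add, LinearMap.add_apply, AlgHom.commutes, Module.algebraMap_end_apply, map_mul,
    Module.End.mul_apply, rep_xD_apply, coeff_add, coeff_X_mul, coeff_zero_rep_apply_eq_zero k a hf,
    add_zero, coeff_smul]

theorem linearCoeff_mul_xD_mul (c : k) (a b : DAlg k) :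
    linearCoeff k ((algebraMap k _ c + xD k * a) * (xD k * b)) = c • linearCoeff k (xD k * b) := by
  have h : (rep k (xD k * b) 1).coeff 0 = 0 := by
    rw [map_mul, Module.End.mul_apply, rep_xD_apply, mul_coeff_zero, coeff_X_zero, zero_mul]
  rw [linearCoeff_apply, map_mul (rep k), Module.End.mul_apply, coeff_one_rep_apply k c a h,
    linearCoeff_apply]

theorem xD_mul_yD_pow_notMem_span (R : Subalgebra k (DAlg k))
    (hR : ∀ z ∈ R, ∃ (c : k) (a : DAlg k), z = algebraMap k _ c + xD k * a)
    (v : ℕ → R) (hv : ∀ j, (v j : DAlg k) = xD k * yD k ^ j) (n : ℕ) :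
    v n ∉ Submodule.span R (v '' Finset.range n) := by
  intro h
  obtain ⟨c, hc⟩ := (Submodule.mem_span_image_finset_iff_exists_fun' R).1 h
  have hlt : linearCoeff k (v n) ∈ degreeLT k n := by
    rw [← hc]
    push_cast
    rw [map_sum]
    refine Submodule.sum_mem _ fun i hi ↦ ?_
    obtain ⟨c', a, hca⟩ := hR _ (c i).2
    rw [smul_eq_mul, Subalgebra.coe_mul, hca, hv, linearCoeff_mul_xD_mul,
      linearCoeff_xD_mul_yD_pow]
    refine Submodule.smul_mem _ _ (mem_degreeLT.2 ?_)
    rw [degree_X_pow]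
    exact_mod_cast Finset.mem_range.1 hi
  rw [hv, linearCoeff_xD_mul_yD_pow, mem_degreeLT, degree_X_pow] at hlt
  exact lt_irrefl _ hlt

end DAlg

open DAlg in
/-- Let `D = k{x,y}/(xy - yx - x²)`.  Then `I = xD` is a two-sided ideal with
`D/I ≅ k[y]` (witnessed by a surjective `k`-algebra map `ψ : D → k[y]` whose kernel is exactly
`xD`), and the subalgebra `R = k + xD` of `D` is not noetherian. -/
theorem xD_twosided_quot_poly_and_k_plus_xD_not_noetherian :
    (∀ d e : DAlg k, (∃ a, d = xD k * a) → (∃ a, d * e = xD k * a) ∧ (∃ a, e * d = xD k * a)) ∧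
    (∃ ψ : DAlg k →ₐ[k] Polynomial k, Function.Surjective ψ ∧
      ∀ d : DAlg k, ψ d = 0 ↔ ∃ a, d = xD k * a) ∧
    (∀ R : Subalgebra k (DAlg k),
      (∀ z, z ∈ R ↔ ∃ (c : k) (a : DAlg k), z = algebraMap k (DAlg k) c + xD k * a) →
      ¬ IsNoetherianRing R) := by
  refine ⟨?_, ⟨toPoly k, fun p ↦ ⟨aeval (yD k) p, toPoly_aeval_yD k p⟩, toPoly_eq_zero_iff k⟩, ?_⟩
  · rintro d e ⟨a, rfl⟩
    obtain ⟨b, hb⟩ := exists_mul_xD_eq_xD_mul k e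
    exact ⟨⟨a * e, mul_assoc _ _ _⟩, ⟨b * a, by rw [← mul_assoc, hb, mul_assoc]⟩⟩
  · intro R hR
    let v : ℕ → R := fun j ↦ ⟨xD k * yD k ^ j, (hR _).2 ⟨0, yD k ^ j, by simp⟩⟩
    exact not_isNoetherian_of_notMem_span v
      (xD_mul_yD_pow_notMem_span k R (fun z ↦ (hR z).1) v fun _ ↦ rfl)
end
end
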